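/- Let R, S be rings and M an (R,S)-bimodule which is an equivalence bimodule. Then the ring homomorphism from R to the endomorphism ring of M as a right S-module, sending r to the map m ↦ r•m, is bijective. -/

import Mathlib

open scoped TensorProduct
open MulOpposite

namespace Paper

noncomputable section

/-- The subgroup of relators defining the balanced tensor product `M ⊗[S] N`
of a right `S`-module `M` and a left `S`-module `N`. -/
def balRel (S : Type*) [Ring S] (M : Type*) [AddCommGroup M] [Module Sᵐᵒᵖ M]
    (N : Type*) [AddCommGroup N] [Module S N] : AddSubgroup (M ⊗[ℤ] N) :=
  AddSubgroup.closure
    {x | ∃ (m : M) (s : S) (n : N), x = (op s • m) ⊗ₜ[ℤ] n - m ⊗ₜ[ℤ] (s • n)}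

/-- The balanced tensor product `M ⊗[S] N` of a right `S`-module `M` and a
left `S`-module `N`: the quotient of the tensor product `M ⊗[ℤ] N` of abelian
groups by the relations `(m • s) ⊗ n = m ⊗ (s • n)`. -/
def BalTensor (S : Type*) [Ring S] (M : Type*) [AddCommGroup M] [Module Sᵐᵒᵖ M]
    (N : Type*) [AddCommGroup N] [Module S N] : Type _ :=
  (M ⊗[ℤ] N) ⧸ balRel S M N

instance (S : Type*) [Ring S] (M : Type*) [AddCommGroup M] [Module Sᵐᵒᵖ M]
    (N : Type*) [AddCommGroup N] [Module S N] : AddCommGroup (BalTensor S M N) :=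
  QuotientAddGroup.Quotient.addCommGroup _

/-- The elementary tensor `m ⊗ n` in the balanced tensor product `M ⊗[S] N`. -/
def BalTensor.tmul (S : Type*) [Ring S] (M : Type*) [AddCommGroup M] [Module Sᵐᵒᵖ M]
    (N : Type*) [AddCommGroup N] [Module S N] (m : M) (n : N) : BalTensor S M N :=
  QuotientAddGroup.mk (m ⊗ₜ[ℤ] n)


/-- The canonical projection onto the balanced tensor product. -/
def BalTensor.mk (S : Type*) [Ring S] (M : Type*) [AddCommGroup M] [Module Sᵐᵒᵖ M]
    (N : Type*) [AddCommGroup N] [Module S N] (x : M ⊗[ℤ] N) : BalTensor S M N :=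
  QuotientAddGroup.mk x

/-- The left action of `r : R` on `M ⊗[ℤ] N` through the first factor. -/
def lsmulAux (R : Type*) [Ring R] (M : Type*) [AddCommGroup M] [Module R M]
    (N : Type*) [AddCommGroup N] (r : R) : M ⊗[ℤ] N →+ M ⊗[ℤ] N :=
  (LinearMap.rTensor N ((DistribMulAction.toAddMonoidHom M r).toIntLinearMap)).toAddMonoidHom

/-- The right action of `t : Tᵐᵒᵖ` on `M ⊗[ℤ] N` through the second factor. -/
def rsmulAux (T : Type*) [Ring T] (M : Type*) [AddCommGroup M]
    (N : Type*) [AddCommGroup N] [Module Tᵐᵒᵖ N] (t : Tᵐᵒᵖ) : M ⊗[ℤ] N →+ M ⊗[ℤ] N :=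
  (LinearMap.lTensor M ((DistribMulAction.toAddMonoidHom N t).toIntLinearMap)).toAddMonoidHom

section LeftAction

variable (R S : Type*) [Ring R] [Ring S]
  (M : Type*) [AddCommGroup M] [Module R M] [Module Sᵐᵒᵖ M] [SMulCommClass R Sᵐᵒᵖ M]
  (N : Type*) [AddCommGroup N] [Module S N]

theorem lsmulAux_le (r : R) :
    balRel S M N ≤ (balRel S M N).comap (lsmulAux R M N r) := by
  rw [balRel, AddSubgroup.closure_le]
  rintro x ⟨m, s, n, rfl⟩
  simp only [SetLike.mem_coe, AddSubgroup.mem_comap, map_sub]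
  have h1 : lsmulAux R M N r ((op s • m) ⊗ₜ[ℤ] n) = (op s • (r • m)) ⊗ₜ[ℤ] n := by
    simp [lsmulAux, LinearMap.rTensor_tmul, smul_comm]
  have h2 : lsmulAux R M N r (m ⊗ₜ[ℤ] (s • n)) = (r • m) ⊗ₜ[ℤ] (s • n) := by
    simp [lsmulAux, LinearMap.rTensor_tmul]
  rw [h1, h2]
  exact AddSubgroup.subset_closure ⟨r • m, s, n, rfl⟩

instance : SMul R (BalTensor S M N) :=
  ⟨fun r => QuotientAddGroup.map _ _ (lsmulAux R M N r) (lsmulAux_le R S M N r)⟩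

theorem BalTensor.lsmul_mk (r : R) (x : M ⊗[ℤ] N) :
    r • (BalTensor.mk S M N x) = BalTensor.mk S M N (lsmulAux R M N r x) := rfl

instance : Module R (BalTensor S M N) where
  smul r x := r • x
  one_smul x := by
    induction x using QuotientAddGroup.induction_on with
    | H y =>
      show QuotientAddGroup.mk (lsmulAux R M N 1 y) = _
      congr 1
      induction y using TensorProduct.induction_on with
      | zero => simp
      | tmul m n => simp [lsmulAux]
      | add a b ha hb => simp only [map_add, ha, hb]
  mul_smul a b x := by
    induction x using QuotientAddGroup.induction_on with
    | H y =>
      show QuotientAddGroup.mk (lsmulAux R M N (a * b) y) =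
        QuotientAddGroup.mk (lsmulAux R M N a (lsmulAux R M N b y))
      congr 1
      induction y using TensorProduct.induction_on with
      | zero => simp
      | tmul m n => simp [lsmulAux, mul_smul]
      | add a' b' ha hb => simp only [map_add, ha, hb]
  smul_zero r := map_zero (QuotientAddGroup.map _ _ (lsmulAux R M N r) (lsmulAux_le R S M N r))
  smul_add r x y := map_add (QuotientAddGroup.map _ _ (lsmulAux R M N r) (lsmulAux_le R S M N r)) x y
  add_smul a b x := by
    induction x using QuotientAddGroup.induction_on with
    | H y =>
      show QuotientAddGroup.mk (lsmulAux R M N (a + b) y) =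
        QuotientAddGroup.mk (lsmulAux R M N a y) + QuotientAddGroup.mk (lsmulAux R M N b y)
      refine (congrArg (fun z : M ⊗[ℤ] N => (QuotientAddGroup.mk z : M ⊗[ℤ] N ⧸ balRel S M N)) ?_).trans
        (QuotientAddGroup.mk_add ..)
      induction y using TensorProduct.induction_on with
      | zero => simp
      | tmul m n => simp [lsmulAux, add_smul, TensorProduct.add_tmul]
      | add a' b' ha hb =>
        simp only [map_add, ha, hb]
        abel
  zero_smul x := by
    induction x using QuotientAddGroup.induction_on with
    | H y =>
      show QuotientAddGroup.mk (lsmulAux R M N (0 : R) y) = 0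
      have : lsmulAux R M N (0 : R) y = 0 := by
        induction y using TensorProduct.induction_on with
        | zero => simp
        | tmul m n => simp [lsmulAux]
        | add a' b' ha hb => simp only [map_add, ha, hb]; abel
      rw [this]
      rfl

theorem BalTensor.smul_tmul (r : R) (m : M) (n : N) :
    r • (BalTensor.tmul S M N m n) = BalTensor.tmul S M N (r • m) n := by
  show QuotientAddGroup.mk (lsmulAux R M N r (m ⊗ₜ[ℤ] n)) = _
  rw [BalTensor.tmul]
  congr 1

end LeftAction

section RightAction

variable (S T : Type*) [Ring S] [Ring T]
  (M : Type*) [AddCommGroup M] [Module Sᵐᵒᵖ M]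
  (N : Type*) [AddCommGroup N] [Module S N] [Module Tᵐᵒᵖ N] [SMulCommClass S Tᵐᵒᵖ N]

theorem rsmulAux_le (t : Tᵐᵒᵖ) :
    balRel S M N ≤ (balRel S M N).comap (rsmulAux T M N t) := by
  rw [balRel, AddSubgroup.closure_le]
  rintro x ⟨m, s, n, rfl⟩
  simp only [SetLike.mem_coe, AddSubgroup.mem_comap, map_sub]
  have h1 : rsmulAux T M N t ((op s • m) ⊗ₜ[ℤ] n) = (op s • m) ⊗ₜ[ℤ] (t • n) := by
    simp [rsmulAux, LinearMap.lTensor_tmul]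
  have h2 : rsmulAux T M N t (m ⊗ₜ[ℤ] (s • n)) = m ⊗ₜ[ℤ] (s • (t • n)) := by
    simp [rsmulAux, LinearMap.lTensor_tmul, smul_comm]
  rw [h1, h2]
  exact AddSubgroup.subset_closure ⟨m, s, t • n, rfl⟩

instance : SMul Tᵐᵒᵖ (BalTensor S M N) :=
  ⟨fun t => QuotientAddGroup.map _ _ (rsmulAux T M N t) (rsmulAux_le S T M N t)⟩

theorem BalTensor.rsmul_mk (t : Tᵐᵒᵖ) (x : M ⊗[ℤ] N) :
    t • (BalTensor.mk S M N x) = BalTensor.mk S M N (rsmulAux T M N t x) := rfl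

instance : Module Tᵐᵒᵖ (BalTensor S M N) where
  smul t x := t • x
  one_smul x := by
    induction x using QuotientAddGroup.induction_on with
    | H y =>
      show QuotientAddGroup.mk (rsmulAux T M N 1 y) = _
      congr 1
      induction y using TensorProduct.induction_on with
      | zero => simp
      | tmul m n => simp [rsmulAux]
      | add a b ha hb => simp only [map_add, ha, hb]
  mul_smul a b x := by
    induction x using QuotientAddGroup.induction_on with
    | H y =>
      show QuotientAddGroup.mk (rsmulAux T M N (a * b) y) =
        QuotientAddGroup.mk (rsmulAux T M N a (rsmulAux T M N b y))
      congr 1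
      induction y using TensorProduct.induction_on with
      | zero => simp
      | tmul m n => simp [rsmulAux, mul_smul]
      | add a' b' ha hb => simp only [map_add, ha, hb]
  smul_zero t := map_zero (QuotientAddGroup.map _ _ (rsmulAux T M N t) (rsmulAux_le S T M N t))
  smul_add t x y := map_add (QuotientAddGroup.map _ _ (rsmulAux T M N t) (rsmulAux_le S T M N t)) x y
  add_smul a b x := by
    induction x using QuotientAddGroup.induction_on with
    | H y =>
      show QuotientAddGroup.mk (rsmulAux T M N (a + b) y) =
        QuotientAddGroup.mk (rsmulAux T M N a y) + QuotientAddGroup.mk (rsmulAux T M N b y)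
      refine (congrArg (fun z : M ⊗[ℤ] N => (QuotientAddGroup.mk z : M ⊗[ℤ] N ⧸ balRel S M N)) ?_).trans
        (QuotientAddGroup.mk_add ..)
      induction y using TensorProduct.induction_on with
      | zero => simp
      | tmul m n => simp [rsmulAux, add_smul, TensorProduct.tmul_add]
      | add a' b' ha hb =>
        simp only [map_add, ha, hb]
        abel
  zero_smul x := by
    induction x using QuotientAddGroup.induction_on with
    | H y =>
      show QuotientAddGroup.mk (rsmulAux T M N (0 : Tᵐᵒᵖ) y) = 0
      have : rsmulAux T M N (0 : Tᵐᵒᵖ) y = 0 := by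
        induction y using TensorProduct.induction_on with
        | zero => simp
        | tmul m n => simp [rsmulAux]
        | add a' b' ha hb => simp only [map_add, ha, hb]; abel
      rw [this]
      rfl

theorem BalTensor.tmul_smul (t : Tᵐᵒᵖ) (m : M) (n : N) :
    t • (BalTensor.tmul S M N m n) = BalTensor.tmul S M N m (t • n) := by
  show QuotientAddGroup.mk (rsmulAux T M N t (m ⊗ₜ[ℤ] n)) = _
  rw [BalTensor.tmul]
  congr 1

end RightAction

section Bimodule

variable (R S T : Type*) [Ring R] [Ring S] [Ring T]
  (M : Type*) [AddCommGroup M] [Module R M] [Module Sᵐᵒᵖ M] [SMulCommClass R Sᵐᵒᵖ M]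
  (N : Type*) [AddCommGroup N] [Module S N] [Module Tᵐᵒᵖ N] [SMulCommClass S Tᵐᵒᵖ N]

instance : SMulCommClass R Tᵐᵒᵖ (BalTensor S M N) where
  smul_comm r t x := by
    induction x using QuotientAddGroup.induction_on with
    | H y =>
      show QuotientAddGroup.mk (lsmulAux R M N r (rsmulAux T M N t y)) =
        QuotientAddGroup.mk (rsmulAux T M N t (lsmulAux R M N r y))
      congr 1
      induction y using TensorProduct.induction_on with
      | zero => simp
      | tmul m n => simp [rsmulAux, lsmulAux]
      | add a b ha hb => simp only [map_add, ha, hb]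

end Bimodule

end

end Paper

/-!
`R` acts on `M ⊗[S] N ≅ R` through its action on `M`, and faithfully on `R`: this is
injectivity. Transported along `eR`, a right `R`-linear endomorphism of `M ⊗[S] N` is left
multiplication by some `r`. For `S`-linear `f : M → M`, `f ⊗ id` is one, so
`f m ⊗ n = (r • m) ⊗ n` for all `n`. Contracting with `m₂` through `eS` gives
`f m • eS (n ⊗ m₂) = (r • m) • eS (n ⊗ m₂)`; by additivity `eS (n ⊗ m₂)` may be replaced by any
element of `S`, and taking `1` gives `f m = r • m`.
-/

namespace Paper.BalTensor

section Basic

variable {S : Type*} [Ring S] {M : Type*} [AddCommGroup M] [Module Sᵐᵒᵖ M]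
  {N : Type*} [AddCommGroup N] [Module S N]

variable (S M N) in
def tmulHom : M →+ N →+ BalTensor S M N :=
  LinearMap.toAddMonoidHom'.comp <|
    ((TensorProduct.mk ℤ M N).compr₂
      (QuotientAddGroup.mk' (balRel S M N)).toIntLinearMap).toAddMonoidHom

@[simp]
theorem tmulHom_apply (m : M) (n : N) : tmulHom S M N m n = tmul S M N m n := rfl

theorem op_smul_tmul (s : S) (m : M) (n : N) :
    tmul S M N (op s • m) n = tmul S M N m (s • n) :=
  (QuotientAddGroup.eq_iff_sub_mem ..).2 (AddSubgroup.subset_closure ⟨m, s, n, rfl⟩)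

variable {P : Type*} [AddCommGroup P]

theorem addHom_ext {f g : BalTensor S M N →+ P}
    (h : ∀ m n, f (tmul S M N m n) = g (tmul S M N m n)) : f = g := by
  ext x
  induction x using QuotientAddGroup.induction_on with
  | H y =>
    induction y using TensorProduct.induction_on with
    | zero => exact (map_zero f).trans (map_zero g).symm
    | tmul m n => exact h m n
    | add a b ha hb =>
      exact (map_add f _ _).trans ((congrArg₂ (· + ·) ha hb).trans (map_add g _ _).symm)

def lift (f : M →+ N →+ P) (hf : ∀ (s : S) m n, f (op s • m) n = f m (s • n)) :
    BalTensor S M N →+ P :=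
  QuotientAddGroup.lift _ (TensorProduct.liftAddHom (R := ℤ) f fun k m n => by simp) <| by
    rw [balRel, AddSubgroup.closure_le]
    rintro _ ⟨m, s, n, rfl⟩
    simp [hf]

@[simp]
theorem lift_tmul (f : M →+ N →+ P) (hf : ∀ (s : S) m n, f (op s • m) n = f m (s • n))
    (m : M) (n : N) : lift f hf (tmul S M N m n) = f m n := rfl

variable {M' : Type*} [AddCommGroup M'] [Module Sᵐᵒᵖ M']

def rTensor (f : M →ₗ[Sᵐᵒᵖ] M') : BalTensor S M N →+ BalTensor S M' N :=
  lift ((tmulHom S M' N).comp f.toAddMonoidHom) fun s m n => by simp [op_smul_tmul]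

@[simp]
theorem rTensor_tmul (f : M →ₗ[Sᵐᵒᵖ] M') (m : M) (n : N) :
    rTensor f (tmul S M N m n) = tmul S M' N (f m) n := rfl

theorem rTensor_smul {T : Type*} [Ring T] [Module Tᵐᵒᵖ N] [SMulCommClass S Tᵐᵒᵖ N]
    (f : M →ₗ[Sᵐᵒᵖ] M') (t : Tᵐᵒᵖ) (x : BalTensor S M N) :
    rTensor f (t • x) = t • rTensor f x := by
  have h_comm : (rTensor f).comp (DistribSMul.toAddMonoidHom _ t) =
      (DistribSMul.toAddMonoidHom _ t).comp (rTensor (N := N) f) := addHom_ext fun m n => by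
    -- `rw`/`simp` do not identify the `SMul` instance of `BalTensor` with the one through
    -- `Module`, so the goal is restated with the former.
    show rTensor f (t • tmul S M N m n) = t • rTensor f (tmul S M N m n)
    simp [tmul_smul]
  exact DFunLike.congr_fun h_comm x

end Basic

theorem faithfulSMul_of_addEquiv {R S : Type*} [Ring R] [Ring S]
    {M : Type*} [AddCommGroup M] [Module R M] [Module Sᵐᵒᵖ M] [SMulCommClass R Sᵐᵒᵖ M]
    {N : Type*} [AddCommGroup N] [Module S N]
    (eR : BalTensor S M N ≃+ R) (eR_left : ∀ (r : R) x, eR (r • x) = r * eR x) :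
    FaithfulSMul R M where
  eq_of_smul_eq_smul {r r'} h := by
    have h_tensor : DistribSMul.toAddMonoidHom (BalTensor S M N) r =
        DistribSMul.toAddMonoidHom _ r' := addHom_ext fun m n => by
      show r • tmul S M N m n = r' • tmul S M N m n
      rw [smul_tmul, smul_tmul, h]
    have h_one : eR (r • eR.symm 1) = eR (r' • eR.symm 1) :=
      congrArg eR (DFunLike.congr_fun h_tensor _)
    simpa [eR_left] using h_one

theorem exists_eq_smul_of_map_op_smul {R S : Type*} [Ring R] [Ring S]
    {M : Type*} [AddCommGroup M] [Module R M] [Module Sᵐᵒᵖ M] [SMulCommClass R Sᵐᵒᵖ M]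
    {N : Type*} [AddCommGroup N] [Module S N] [Module Rᵐᵒᵖ N] [SMulCommClass S Rᵐᵒᵖ N]
    (eR : BalTensor S M N ≃+ R) (eR_left : ∀ (r : R) x, eR (r • x) = r * eR x)
    (eR_right : ∀ (r : R) x, eR (op r • x) = eR x * r)
    (Φ : BalTensor S M N →+ BalTensor S M N) (hΦ : ∀ (a : R) x, Φ (op a • x) = op a • Φ x) :
    ∃ r : R, ∀ x, Φ x = r • x := by
  set x₀ := eR.symm 1
  have h_gen (x : BalTensor S M N) : op (eR x) • x₀ = x :=
    eR.injective (by simp [x₀, eR_right])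
  obtain ⟨r, h_x₀⟩ : ∃ r : R, Φ x₀ = r • x₀ :=
    ⟨eR (Φ x₀), eR.injective (by simp [x₀, eR_left])⟩
  refine ⟨r, fun x => ?_⟩
  rw [← h_gen x, hΦ, h_x₀, smul_comm r]

section Contraction

variable {R S : Type*} [Ring R] [Ring S]
  {M : Type*} [AddCommGroup M] [Module R M] [Module Sᵐᵒᵖ M]
  {N : Type*} [AddCommGroup N] [Module S N] [Module Rᵐᵒᵖ N] [SMulCommClass S Rᵐᵒᵖ N]

/-- The map `m ⊗ n ↦ m • eS (n ⊗ m₂)`; it is balanced because `eS` is left `S`-linear. -/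
def contract (eS : BalTensor R N M ≃+ S) (eS_left : ∀ (s : S) x, eS (s • x) = s * eS x)
    (m₂ : M) : BalTensor S M N →+ M :=
  lift ((smulAddHom Sᵐᵒᵖ M).comp
      (opAddEquiv.toAddMonoidHom.comp (eS.toAddMonoidHom.comp ((tmulHom R N M).flip m₂)))).flip
    fun s m n => by
      simp only [AddMonoidHom.flip_apply, AddMonoidHom.comp_apply, tmulHom_apply,
        smulAddHom_apply, AddEquiv.coe_toAddMonoidHom, opAddEquiv_apply]
      rw [← smul_tmul, eS_left]
      simp [mul_smul]

theorem eq_of_forall_tmul_eq (eS : BalTensor R N M ≃+ S)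
    (eS_left : ∀ (s : S) x, eS (s • x) = s * eS x) {m m' : M}
    (h : ∀ n : N, tmul S M N m n = tmul S M N m' n) : m = m' := by
  have h_tmul (n : N) (m₂ : M) :
      op (eS (tmul R N M n m₂)) • m = op (eS (tmul R N M n m₂)) • m' := by
    simpa [contract] using congrArg (contract eS eS_left m₂) (h n)
  let act (m : M) : BalTensor R N M →+ M :=
    ((smulAddHom Sᵐᵒᵖ M).flip m).comp (opAddEquiv.toAddMonoidHom.comp eS.toAddMonoidHom)
  have h_all : act m = act m' := addHom_ext fun n m₂ => by simpa [act] using h_tmul n m₂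
  simpa [act] using DFunLike.congr_fun h_all (eS.symm 1)

end Contraction

end Paper.BalTensor

open Paper MulOpposite in
theorem equivalence_bimodule_end_iso_general
    (R S : Type*) [Ring R] [Ring S]
    (M : Type*) [AddCommGroup M] [Module R M] [Module Sᵐᵒᵖ M] [SMulCommClass R Sᵐᵒᵖ M]
    (N : Type*) [AddCommGroup N] [Module S N] [Module Rᵐᵒᵖ N] [SMulCommClass S Rᵐᵒᵖ N]
    (eR : BalTensor S M N ≃+ R)
    (eR_left : ∀ (r : R) (x : BalTensor S M N), eR (r • x) = r * eR x)
    (eR_right : ∀ (r : R) (x : BalTensor S M N), eR (op r • x) = eR x * r)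
    (eS : BalTensor R N M ≃+ S)
    (eS_left : ∀ (s : S) (x : BalTensor R N M), eS (s • x) = s * eS x) :
    Function.Bijective (Module.toModuleEnd Sᵐᵒᵖ (S := R) M) := by
  have := BalTensor.faithfulSMul_of_addEquiv eR eR_left
  refine ⟨fun r r' h => eq_of_smul_eq_smul (α := M) (LinearMap.congr_fun h), fun f => ?_⟩
  obtain ⟨r, hr⟩ := BalTensor.exists_eq_smul_of_map_op_smul eR eR_left eR_right
    (BalTensor.rTensor (N := N) f) fun a => BalTensor.rTensor_smul f (op a)
  refine ⟨r, LinearMap.ext fun m => BalTensor.eq_of_forall_tmul_eq eS eS_left fun n => ?_⟩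
  simpa [BalTensor.smul_tmul] using (hr (BalTensor.tmul S M N m n)).symm

open Paper MulOpposite in
/-- **part of 'Morita I'.** Let `R, S` be rings and `M` an `(R,S)`-bimodule
which is an equivalence bimodule (i.e. there is an `(S,R)`-bimodule `N` with `(R,R)`- and
`(S,S)`-bimodule isomorphisms `M ⊗[S] N ≅ R` and `N ⊗[R] M ≅ S`). Then the ring
homomorphism from `R` to the endomorphism ring of `M` as a right `S`-module, sending `r`
to the map `m ↦ r • m`, is bijective. -/
theorem equivalence_bimodule_end_iso
    (R S : Type*) [Ring R] [Ring S]
    (M : Type*) [AddCommGroup M] [Module R M] [Module Sᵐᵒᵖ M] [SMulCommClass R Sᵐᵒᵖ M]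
    (N : Type*) [AddCommGroup N] [Module S N] [Module Rᵐᵒᵖ N] [SMulCommClass S Rᵐᵒᵖ N]
    (eR : BalTensor S M N ≃+ R)
    (eR_left : ∀ (r : R) (x : BalTensor S M N), eR (r • x) = r * eR x)
    (eR_right : ∀ (r : R) (x : BalTensor S M N), eR (op r • x) = eR x * r)
    (eS : BalTensor R N M ≃+ S)
    (eS_left : ∀ (s : S) (x : BalTensor R N M), eS (s • x) = s * eS x)
    (eS_right : ∀ (s : S) (x : BalTensor R N M), eS (op s • x) = eS x * s) :
    Function.Bijective (Module.toModuleEnd Sᵐᵒᵖ (S := R) M) :=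
  equivalence_bimodule_end_iso_general R S M N eR eR_left eR_right eS eS_left
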